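/- arXiv:1208.5393 — 3 statements merged into one kernel-verified Lean document; each statement's English description precedes it below -/
import Mathlib

section
/- Let μ ∈ H³((0,1),ℝ) (i.e. μ is C² with μ'' absolutely continuous and μ''' ∈ L²). Then as k → ∞, ⟨μφ₁, φ_k⟩ = 2∫₀¹ μ(x) sin(πx) sin(kπx) dx = 4[(−1)^{k+1} μ'(1) − μ'(0)]/(k³π²) + o(1/k³). -/
/-!
Write `f x = μ x * sin (π x)`, which vanishes at `0` and `1`. Three integrations by parts against
`sin (kπx)`, `cos (kπx)`, `sin (kπx)` give
`(kπ)³ ∫₀¹ f sin (kπx) = -(f''(0) - (-1)ᵏ f''(1)) - ∫₀¹ f''' cos (kπx)`,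
and the last integral tends to `0` by the Riemann–Lebesgue lemma, since `f''` is absolutely
continuous on `[0, 1]`. Finally `f''(0) = 2π μ'(0)` and `f''(1) = -2π μ'(1)`.
-/

open Real MeasureTheory Filter Asymptotics

/-- `μ ∈ H³((0,1),ℝ)`: `μ` is `C²` with `μ''` absolutely continuous (primitive of some `g`)
and `μ''' = g ∈ L²(0,1)`. -/
def IsH3 (μ : ℝ → ℝ) : Prop :=
  ContDiff ℝ 2 μ ∧
  ∃ g : ℝ → ℝ,
    MeasureTheory.MemLp g 2 (MeasureTheory.volume.restrict (Set.Ioc (0:ℝ) 1)) ∧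
    ∀ x ∈ Set.Icc (0:ℝ) 1,
      deriv (deriv μ) x = deriv (deriv μ) 0 + ∫ t in (0:ℝ)..x, g t

open Topology Set

theorem Real.tendsto_integral_mul_cos_cocompact {f : ℝ → ℝ} (hf : Integrable f) :
    Tendsto (fun t : ℝ => ∫ x, f x * cos (t * x)) (cocompact ℝ) (𝓝 0) := by
  -- Mathlib's Fourier character is `y ↦ exp (2πiy)`, hence the rescaling of the frequency.
  have hscale : Tendsto (fun t : ℝ => t * (2 * π)⁻¹) (cocompact ℝ) (cocompact ℝ) :=
    tendsto_cocompact_mul_right₀ (by positivity)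
  have hRL := (Complex.continuous_re.tendsto 0).comp
    ((Real.tendsto_integral_exp_smul_cocompact fun x => (f x : ℂ)).comp hscale)
  refine (hRL.congr fun t => ?_).trans (by simp)
  have hexp (x : ℝ) : Real.fourierChar (-(x * (t * (2 * π)⁻¹))) • (f x : ℂ) =
      Complex.exp (↑(-(t * x)) * Complex.I) * (f x : ℂ) := by
    rw [Circle.smul_def, Real.fourierChar_apply]
    congr 3
    field_simp
  simp only [Function.comp_apply, hexp]
  rw [← RCLike.re_to_complex, ← integral_re]
  · congr 1 with x
    rw [RCLike.re_to_complex, Complex.re_mul_ofReal, Complex.exp_ofReal_mul_I_re, cos_neg, mul_comm]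
  · refine hf.ofReal.bdd_mul (c := 1) (by fun_prop) (ae_of_all _ fun x => ?_)
    rw [Complex.norm_exp_ofReal_mul_I]

theorem tendsto_setIntegral_mul_cos_cocompact {f : ℝ → ℝ} {s : Set ℝ} (hs : MeasurableSet s)
    (hf : IntegrableOn f s) :
    Tendsto (fun t : ℝ => ∫ x in s, f x * cos (t * x)) (cocompact ℝ) (𝓝 0) := by
  refine (Real.tendsto_integral_mul_cos_cocompact ((integrable_indicator_iff hs).2 hf)).congr
    fun t => ?_
  rw [← integral_indicator hs]
  congr 1 with x
  by_cases hx : x ∈ s <;> simp [hx]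

theorem IntervalIntegrable.tendsto_integral_mul_cos_cocompact {f : ℝ → ℝ} {a b : ℝ}
    (hf : IntervalIntegrable f volume a b) :
    Tendsto (fun t : ℝ => ∫ x in a..b, f x * cos (t * x)) (cocompact ℝ) (𝓝 0) := by
  have := (tendsto_setIntegral_mul_cos_cocompact measurableSet_Ioc hf.1).sub
    (tendsto_setIntegral_mul_cos_cocompact measurableSet_Ioc hf.2)
  rwa [sub_zero] at this

theorem deriv_sin_const_mul (c : ℝ) : deriv (fun x => sin (c * x)) = fun x => c * cos (c * x) :=
  funext fun x => ((hasDerivAt_id' x).const_mul c).sin.deriv.trans (by ring)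

theorem deriv_cos_const_mul (c : ℝ) :
    deriv (fun x => cos (c * x)) = fun x => -(c * sin (c * x)) :=
  funext fun x => ((hasDerivAt_id' x).const_mul c).cos.deriv.trans (by ring)

theorem deriv_deriv_mul {u v : ℝ → ℝ} (hu : ContDiff ℝ 2 u) (hv : ContDiff ℝ 2 v) :
    deriv (deriv fun x => u x * v x) =
      fun x => deriv (deriv u) x * v x + 2 * (deriv u x * deriv v x) + u x * deriv (deriv v) x := by
  have hu1 : Differentiable ℝ u := hu.differentiable two_ne_zero
  have hv1 : Differentiable ℝ v := hv.differentiable two_ne_zero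
  have hu2 : Differentiable ℝ (deriv u) := hu.deriv'.differentiable one_ne_zero
  have hv2 : Differentiable ℝ (deriv v) := hv.deriv'.differentiable one_ne_zero
  have h1 : deriv (fun x => u x * v x) = fun x => deriv u x * v x + u x * deriv v x :=
    funext fun x => deriv_fun_mul (hu1 x) (hv1 x)
  rw [h1]
  funext x
  rw [deriv_fun_add ((hu2 x).fun_mul (hv1 x)) ((hu1 x).fun_mul (hv2 x)),
    deriv_fun_mul (hu2 x) (hv1 x), deriv_fun_mul (hu1 x) (hv2 x)]
  ring

namespace AbsolutelyContinuousOnInterval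

theorem congr {X : Type*} [PseudoMetricSpace X] {f g : ℝ → X} {a b : ℝ}
    (hf : AbsolutelyContinuousOnInterval f a b) (hfg : EqOn f g (uIcc a b)) :
    AbsolutelyContinuousOnInterval g a b := by
  refine Tendsto.congr' (eventually_inf_principal.2 (Eventually.of_forall fun E hE => ?_)) hf
  exact Finset.sum_congr rfl fun i hi => by rw [hfg (hE.1 i hi).1, hfg (hE.1 i hi).2]

variable {f : ℝ → ℝ} {a b ω : ℝ}

theorem integral_mul_sin (hf : AbsolutelyContinuousOnInterval f a b) (hω : ω ≠ 0) :
    ∫ x in a..b, f x * sin (ω * x) =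
      (f a * cos (ω * a) - f b * cos (ω * b) + ∫ x in a..b, deriv f x * cos (ω * x)) / ω := by
  have hderiv : deriv (fun x => cos (ω * x) / -ω) = fun x => sin (ω * x) := funext fun x =>
    (((hasDerivAt_id' x).const_mul ω).cos.div_const (-ω)).deriv.trans (by field_simp)
  have hibp := hf.integral_mul_deriv_eq_deriv_mul (g := fun x => cos (ω * x) / -ω)
    (ContDiffOn.absolutelyContinuousOnInterval (by fun_prop))
  rw [hderiv] at hibp
  have hrest : ∫ x in a..b, deriv f x * (cos (ω * x) / -ω) =
      -(∫ x in a..b, deriv f x * cos (ω * x)) / ω := by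
    rw [← intervalIntegral.integral_neg, ← intervalIntegral.integral_div]
    congr 1 with x
    field_simp
  rw [hibp, hrest]
  field_simp
  ring

theorem integral_mul_cos (hf : AbsolutelyContinuousOnInterval f a b) (hω : ω ≠ 0) :
    ∫ x in a..b, f x * cos (ω * x) =
      (f b * sin (ω * b) - f a * sin (ω * a) - ∫ x in a..b, deriv f x * sin (ω * x)) / ω := by
  have hderiv : deriv (fun x => sin (ω * x) / ω) = fun x => cos (ω * x) := funext fun x =>
    (((hasDerivAt_id' x).const_mul ω).sin.div_const ω).deriv.trans (by field_simp)
  have hibp := hf.integral_mul_deriv_eq_deriv_mul (g := fun x => sin (ω * x) / ω)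
    (ContDiffOn.absolutelyContinuousOnInterval (by fun_prop))
  rw [hderiv] at hibp
  have hrest : ∫ x in a..b, deriv f x * (sin (ω * x) / ω) =
      (∫ x in a..b, deriv f x * sin (ω * x)) / ω := by
    simp only [← mul_div_assoc, intervalIntegral.integral_div]
  rw [hibp, hrest]
  ring

theorem deriv_deriv_mul {u v : ℝ → ℝ} (hu : ContDiff ℝ 2 u) (hv : ContDiff ℝ 3 v)
    (hu'' : AbsolutelyContinuousOnInterval (deriv (deriv u)) a b) :
    AbsolutelyContinuousOnInterval (deriv (deriv fun x => u x * v x)) a b := by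
  have hv2 : ContDiff ℝ 2 v := hv.of_le (by norm_num)
  rw [_root_.deriv_deriv_mul hu hv2]
  refine (hu''.mul ?_).add ?_ |>.add ?_ <;>
    refine ContDiffOn.absolutelyContinuousOnInterval (ContDiff.contDiffOn ?_)
  · exact hv2.of_le one_le_two
  · exact contDiff_const.mul (hu.deriv'.mul hv2.deriv')
  · exact (hu.of_le one_le_two).mul hv.deriv'.deriv'

end AbsolutelyContinuousOnInterval

theorem tendsto_cube_mul_integral_mul_sin {f : ℝ → ℝ} (h0 : f 0 = 0) (h1 : f 1 = 0)
    (hf : AbsolutelyContinuousOnInterval f 0 1)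
    (hf' : AbsolutelyContinuousOnInterval (deriv f) 0 1)
    (hf'' : AbsolutelyContinuousOnInterval (deriv (deriv f)) 0 1) :
    Tendsto (fun k : ℕ => (k : ℝ) ^ 3 * (∫ x in (0 : ℝ)..1, f x * sin (k * π * x)) +
      (deriv (deriv f) 0 - (-1) ^ k * deriv (deriv f) 1) / π ^ 3) atTop (𝓝 0) := by
  have hfreq : Tendsto (fun k : ℕ => (k : ℝ) * π) atTop (cocompact ℝ) :=
    (tendsto_natCast_atTop_atTop.atTop_mul_const pi_pos).mono_right atTop_le_cocompact
  have hRL := (hf''.intervalIntegrable_deriv.tendsto_integral_mul_cos_cocompact.comp hfreq).div_const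
    (-π ^ 3)
  rw [zero_div] at hRL
  refine hRL.congr' ?_
  filter_upwards [eventually_ne_atTop 0] with k hk
  have hω : (k : ℝ) * π ≠ 0 := by positivity
  rw [hf.integral_mul_sin hω, hf'.integral_mul_cos hω, hf''.integral_mul_sin hω]
  simp only [Function.comp_apply, mul_zero, mul_one, cos_zero, sin_zero, cos_nat_mul_pi,
    sin_nat_mul_pi, h0, h1]
  field_simp
  ring

theorem IsH3.absolutelyContinuousOnInterval_deriv_deriv {μ : ℝ → ℝ} (hμ : IsH3 μ) :
    AbsolutelyContinuousOnInterval (deriv (deriv μ)) 0 1 := by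
  obtain ⟨-, g, hg, hrep⟩ := hμ
  have hgi : IntervalIntegrable g volume 0 1 :=
    (intervalIntegrable_iff_integrableOn_Ioc_of_le zero_le_one).2 (hg.integrable one_le_two)
  refine (((contDiffOn_const (c := deriv (deriv μ) 0)).absolutelyContinuousOnInterval).add
    (hgi.absolutelyContinuousOnInterval_intervalIntegral left_mem_uIcc)).congr fun x hx => ?_
  rw [uIcc_of_le zero_le_one] at hx
  exact (hrep x hx).symm

/-- For `μ ∈ H³`, as `k → ∞`:
`⟨μφ₁,φ_k⟩ = 2∫₀¹ μ(x) sin(πx) sin(kπx) dx = 4[(−1)^{k+1}μ'(1) − μ'(0)]/(k³π²) + o(1/k³)`. -/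
theorem asymptotics_of_moment_coefficients (μ : ℝ → ℝ) (hμ : IsH3 μ) :
    (fun k : ℕ =>
        (2 * ∫ x in (0:ℝ)..1, μ x * Real.sin (Real.pi * x) * Real.sin (k * Real.pi * x)) -
          4 * ((-1 : ℝ) ^ (k + 1) * deriv μ 1 - deriv μ 0) / ((k : ℝ) ^ 3 * Real.pi ^ 2))
      =o[atTop] fun k : ℕ => 1 / (k : ℝ) ^ 3 := by
  have hsin : ContDiff ℝ 3 fun x => sin (π * x) := by fun_prop
  have hf : ContDiff ℝ 2 fun x => μ x * sin (π * x) := hμ.1.mul (hsin.of_le (by norm_num))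
  have hcube := tendsto_cube_mul_integral_mul_sin (by simp) (by simp)
    ((hf.of_le one_le_two).contDiffOn.absolutelyContinuousOnInterval)
    (hf.deriv'.contDiffOn.absolutelyContinuousOnInterval)
    (hμ.absolutelyContinuousOnInterval_deriv_deriv.deriv_deriv_mul hμ.1 hsin)
  rw [deriv_deriv_mul hμ.1 (hsin.of_le (by norm_num))] at hcube
  simp only [deriv_sin_const_mul, deriv_const_mul_field', deriv_cos_const_mul, mul_zero, mul_one,
    sin_zero, cos_zero, sin_pi, cos_pi, zero_add, neg_zero, add_zero, mul_neg, sub_neg_eq_add]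
    at hcube
  refine (((isLittleO_one_iff ℝ).2 hcube).mul_isBigO (isBigO_refl (fun k : ℕ => 1 / (k : ℝ) ^ 3) atTop)
    |>.const_mul_left 2).congr' ?_ (by simp)
  filter_upwards [eventually_ne_atTop 0] with k hk
  field_simp
  ring
end

section
/- Let μ ∈ H³((0,1),ℝ) with μ'(1) + μ'(0) ≠ 0 and μ'(1) − μ'(0) ≠ 0. Then the set {k ∈ ℕ* : ⟨μφ₁, φ_k⟩ = 0} is finite, and there exists c > 0 such that |⟨μφ₁, φ_k⟩| ≥ c/k³ for all k outside this finite set. -/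
open Real MeasureTheory

/-- `⟨μφ₁,φ_k⟩ = 2∫₀¹ μ(x) sin(πx) sin(kπx) dx`. -/
noncomputable def momentCoeff (μ : ℝ → ℝ) (k : ℕ) : ℝ :=
  2 * ∫ x in (0:ℝ)..1, μ x * Real.sin (Real.pi * x) * Real.sin (k * Real.pi * x)

open Filter Set Topology

set_option maxHeartbeats 1000000

private lemma sin_deriv (c x : ℝ) :
    HasDerivAt (fun y : ℝ => Real.sin (c * y)) (c * Real.cos (c * x)) x := by
  simpa [Function.comp_def, mul_comm] using
    (Real.hasDerivAt_sin (c * x)).comp x ((hasDerivAt_id x).const_mul c)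

private lemma cos_deriv (c x : ℝ) :
    HasDerivAt (fun y : ℝ => Real.cos (c * y)) (-(c * Real.sin (c * x))) x := by
  simpa [Function.comp_def, mul_comm] using
    (Real.hasDerivAt_cos (c * x)).comp x ((hasDerivAt_id x).const_mul c)

private lemma ibp_mu (μ : ℝ → ℝ) (hd1 : Differentiable ℝ μ) (hd2 : Differentiable ℝ (deriv μ))
    (hc2 : Continuous (deriv (deriv μ))) (m : ℕ) (hm : 1 ≤ m) :
    ∫ x in (0:ℝ)..1, μ x * Real.cos (m * π * x) =
      ((-1)^m * deriv μ 1 - deriv μ 0) / ((m:ℝ)^2 * π^2)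
        - (1/((m:ℝ)^2*π^2)) * ∫ x in (0:ℝ)..1, deriv (deriv μ) x * Real.cos (m * π * x) := by
  have hm' : (1:ℝ) ≤ (m:ℝ) := by exact_mod_cast hm
  set c : ℝ := (m:ℝ) * π with hc
  have hcpos : 0 < c := by
    have := Real.pi_pos
    nlinarith
  have hc0 : c ≠ 0 := ne_of_gt hcpos
  have hsinc : Real.sin c = 0 := by
    rw [hc]; exact Real.sin_nat_mul_pi m
  have hcosc : Real.cos c = (-1)^m := by
    rw [hc]; simpa using Real.cos_add_nat_mul_pi 0 m
  have hd1' : Continuous (deriv μ) := hd2.continuous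
  -- first IBP
  have h1 : ∫ x in (0:ℝ)..1, μ x * Real.cos (c * x)
      = -(1/c) * ∫ x in (0:ℝ)..1, deriv μ x * Real.sin (c * x) := by
    have hv : ∀ x ∈ uIcc (0:ℝ) 1, HasDerivAt (fun y => Real.sin (c * y) / c) (Real.cos (c * x)) x := by
      intro x _
      simpa [mul_div_cancel_left₀ _ hc0] using (sin_deriv c x).div_const c
    have := intervalIntegral.integral_mul_deriv_eq_deriv_mul
      (u := μ) (v := fun y => Real.sin (c * y) / c) (u' := deriv μ) (v' := fun y => Real.cos (c * y))
      (fun x _ => (hd1 x).hasDerivAt) hv (hd1'.intervalIntegrable 0 1)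
      ((Real.continuous_cos.comp (continuous_const.mul continuous_id)).intervalIntegrable 0 1)
    rw [this]
    simp only [mul_one, mul_zero, hsinc, Real.sin_zero, zero_div, mul_zero, sub_zero, zero_sub]
    rw [show (fun x => deriv μ x * (Real.sin (c*x) / c)) = fun x => (deriv μ x * Real.sin (c*x)) / c by
      funext x; ring, intervalIntegral.integral_div]
    ring
  -- second IBP
  have h2 : ∫ x in (0:ℝ)..1, deriv μ x * Real.sin (c * x)
      = (deriv μ 0 - (-1)^m * deriv μ 1)/c
        + (1/c) * ∫ x in (0:ℝ)..1, deriv (deriv μ) x * Real.cos (c * x) := by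
    have hv : ∀ x ∈ uIcc (0:ℝ) 1,
        HasDerivAt (fun y => -(Real.cos (c * y) / c)) (Real.sin (c * x)) x := by
      intro x _
      have := ((cos_deriv c x).div_const c).neg
      simpa [Pi.neg_def, neg_div, mul_div_cancel_left₀ _ hc0] using this
    have := intervalIntegral.integral_mul_deriv_eq_deriv_mul
      (u := deriv μ) (v := fun y => -(Real.cos (c * y) / c)) (u' := deriv (deriv μ))
      (v' := fun y => Real.sin (c * y))
      (fun x _ => (hd2 x).hasDerivAt) hv (hc2.intervalIntegrable 0 1)
      ((Real.continuous_sin.comp (continuous_const.mul continuous_id)).intervalIntegrable 0 1)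
    rw [this]
    simp only [mul_one, mul_zero, hcosc, Real.cos_zero]
    rw [show (fun x => deriv (deriv μ) x * -(Real.cos (c*x) / c))
        = fun x => -((deriv (deriv μ) x * Real.cos (c*x)) / c) by funext x; ring,
      intervalIntegral.integral_neg, intervalIntegral.integral_div]
    ring
  rw [h1, h2]
  have : c^2 = (m:ℝ)^2 * π^2 := by rw [hc]; ring
  rw [← this]
  field_simp
  ring

private lemma integral_cos_c (c : ℝ) (hc0 : c ≠ 0) (a b : ℝ) :
    ∫ x in a..b, Real.cos (c * x) = Real.sin (c * b) / c - Real.sin (c * a) / c := by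
  apply intervalIntegral.integral_eq_sub_of_hasDerivAt
  · intro x _
    simpa [mul_div_cancel_left₀ _ hc0] using (sin_deriv c x).div_const c
  · exact (Real.continuous_cos.comp (continuous_const.mul continuous_id)).intervalIntegrable a b

private lemma fubini_step (g : ℝ → ℝ) (hgm : StronglyMeasurable g)
    (hgi : IntegrableOn g (Set.Ioc (0:ℝ) 1)) (m : ℕ) (hm : 1 ≤ m) :
    ∫ x in (0:ℝ)..1, (∫ t in (0:ℝ)..x, g t) * Real.cos (m * π * x)
      = -(1/((m:ℝ)*π)) * ∫ t in (0:ℝ)..1, g t * Real.sin (m * π * t) := by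
  have hm' : (1:ℝ) ≤ (m:ℝ) := by exact_mod_cast hm
  set c : ℝ := (m:ℝ) * π with hc
  have hcpos : 0 < c := by have := Real.pi_pos; nlinarith
  have hc0 : c ≠ 0 := ne_of_gt hcpos
  have hsinc : Real.sin c = 0 := by rw [hc]; exact Real.sin_nat_mul_pi m
  set ρ : Measure ℝ := volume.restrict (Set.Ioc (0:ℝ) 1) with hρ
  -- step A : rewrite LHS as a double integral
  have hA : ∫ x in (0:ℝ)..1, (∫ t in (0:ℝ)..x, g t) * Real.cos (c * x)
      = ∫ x, (∫ t, (Set.Iic x).indicator g t * Real.cos (c * x) ∂ρ) ∂ρ := by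
    rw [intervalIntegral.integral_of_le zero_le_one]
    apply setIntegral_congr_fun measurableSet_Ioc
    intro x hx
    have h1 : ∫ t in (0:ℝ)..x, g t = ∫ t, (Set.Iic x).indicator g t ∂ρ := by
      rw [hρ, setIntegral_indicator measurableSet_Iic,
        Set.Ioc_inter_Iic, min_eq_right hx.2, intervalIntegral.integral_of_le hx.1.le]
    show (∫ t in (0:ℝ)..x, g t) * Real.cos (c * x) = ∫ t, (Set.Iic x).indicator g t * Real.cos (c * x) ∂ρ
    rw [h1, ← integral_mul_const]
  rw [hA]
  -- integrability on the product
  have hmeas : StronglyMeasurable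
      (Function.uncurry fun x t => (Set.Iic x).indicator g t * Real.cos (c * x)) := by
    have : (Function.uncurry fun x t => (Set.Iic x).indicator g t * Real.cos (c * x))
        = {q : ℝ × ℝ | q.2 ≤ q.1}.indicator (fun q => g q.2 * Real.cos (c * q.1)) := by
      funext p
      by_cases h : p.2 ≤ p.1 <;>
        simp [Function.uncurry, Set.indicator_apply, h]
    rw [this]
    exact ((hgm.comp_measurable measurable_snd).mul
      ((Real.continuous_cos.comp (continuous_const.mul continuous_fst)).stronglyMeasurable)).indicator
      (measurableSet_le measurable_snd measurable_fst)
  have hdom : Integrable (fun p : ℝ × ℝ => g p.2) (ρ.prod ρ) := by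
    have := (integrable_const (1:ℝ) (μ := ρ)).mul_prod hgi
    simpa using this
  have hint : Integrable
      (Function.uncurry fun x t => (Set.Iic x).indicator g t * Real.cos (c * x)) (ρ.prod ρ) := by
    apply Integrable.mono' hdom.norm hmeas.aestronglyMeasurable
    filter_upwards with p
    rw [Function.uncurry]
    simp only [norm_mul, Real.norm_eq_abs]
    calc |(Set.Iic p.1).indicator g p.2| * |Real.cos (c * p.1)|
        ≤ |g p.2| * 1 := by
          apply mul_le_mul _ (Real.abs_cos_le_one _) (abs_nonneg _) (abs_nonneg _)
          by_cases h : p.2 ∈ Set.Iic p.1 <;> simp [Set.indicator_apply, h, abs_nonneg]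
      _ = ‖g p.2‖ := by rw [mul_one, Real.norm_eq_abs]
  -- swap
  rw [MeasureTheory.integral_integral_swap hint]
  -- inner integral computation
  have hB : ∀ t ∈ Set.Ioc (0:ℝ) 1,
      (∫ x, (Set.Iic x).indicator g t * Real.cos (c * x) ∂ρ)
        = -(1/c) * (g t * Real.sin (c * t)) := by
    intro t ht
    have h1 : (fun x => (Set.Iic x).indicator g t * Real.cos (c * x))
        = (Set.Ici t).indicator (fun x => g t * Real.cos (c * x)) := by
      funext x
      by_cases h : t ≤ x <;> simp [Set.indicator_apply, h]
    rw [h1, hρ, setIntegral_indicator measurableSet_Ici]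
    have h2 : Set.Ioc (0:ℝ) 1 ∩ Set.Ici t = Set.Icc t 1 := by
      ext y
      simp only [Set.mem_inter_iff, Set.mem_Ioc, Set.mem_Ici, Set.mem_Icc]
      constructor
      · rintro ⟨⟨_, h2⟩, h3⟩; exact ⟨h3, h2⟩
      · rintro ⟨h1', h2⟩; exact ⟨⟨lt_of_lt_of_le ht.1 h1', h2⟩, h1'⟩
    rw [h2, integral_Icc_eq_integral_Ioc, ← intervalIntegral.integral_of_le ht.2,
      intervalIntegral.integral_const_mul, integral_cos_c c hc0, mul_one, hsinc]
    ring
  rw [setIntegral_congr_fun measurableSet_Ioc hB, integral_const_mul,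
    ← intervalIntegral.integral_of_le zero_le_one]

private lemma second_deriv_int (μ g : ℝ → ℝ) (hc2 : Continuous (deriv (deriv μ)))
    (hgm : StronglyMeasurable g) (hgi : IntegrableOn g (Set.Ioc (0:ℝ) 1))
    (heq : ∀ x ∈ Set.Icc (0:ℝ) 1, deriv (deriv μ) x = deriv (deriv μ) 0 + ∫ t in (0:ℝ)..x, g t)
    (m : ℕ) (hm : 1 ≤ m) :
    ∫ x in (0:ℝ)..1, deriv (deriv μ) x * Real.cos (m * π * x)
      = -(1/((m:ℝ)*π)) * ∫ t in (0:ℝ)..1, g t * Real.sin (m * π * t) := by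
  have hm' : (1:ℝ) ≤ (m:ℝ) := by exact_mod_cast hm
  set c : ℝ := (m:ℝ) * π with hc
  have hcpos : 0 < c := by have := Real.pi_pos; nlinarith
  have hc0 : c ≠ 0 := ne_of_gt hcpos
  have hsinc : Real.sin c = 0 := by rw [hc]; exact Real.sin_nat_mul_pi m
  -- continuity of the primitive
  have hgIcc : IntegrableOn g (Set.uIcc (0:ℝ) 1) := by
    rw [Set.uIcc_of_le zero_le_one, integrableOn_Icc_iff_integrableOn_Ioc]
    exact hgi
  have hFcont : ContinuousOn (fun x => ∫ t in (0:ℝ)..x, g t) (Set.uIcc (0:ℝ) 1) :=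
    intervalIntegral.continuousOn_primitive_interval hgIcc
  have h1 : ∫ x in (0:ℝ)..1, deriv (deriv μ) x * Real.cos (c * x)
      = ∫ x in (0:ℝ)..1,
          (deriv (deriv μ) 0 * Real.cos (c * x) + (∫ t in (0:ℝ)..x, g t) * Real.cos (c * x)) := by
    apply intervalIntegral.integral_congr
    intro x hx
    rw [Set.uIcc_of_le zero_le_one] at hx
    show deriv (deriv μ) x * Real.cos (c * x) = _
    rw [heq x hx]; ring
  rw [h1, intervalIntegral.integral_add]
  · rw [intervalIntegral.integral_const_mul, integral_cos_c c hc0, fubini_step g hgm hgi m hm]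
    rw [mul_one, mul_zero, hsinc, Real.sin_zero]
    simp [hc]
  · exact (continuous_const.mul
      (Real.continuous_cos.comp (continuous_const.mul continuous_id))).intervalIntegrable 0 1
  · apply ContinuousOn.intervalIntegrable
    exact hFcont.mul
      (Real.continuous_cos.comp (continuous_const.mul continuous_id)).continuousOn

private lemma riemann_lebesgue (g : ℝ → ℝ) (hgm : StronglyMeasurable g)
    (hgi : IntegrableOn g (Set.Ioc (0:ℝ) 1)) :
    Tendsto (fun m : ℕ => ∫ t in (0:ℝ)..1, g t * Real.sin (m * π * t)) atTop (𝓝 0) := by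
  set f : ℝ → ℂ := (Set.Ioc (0:ℝ) 1).indicator (fun t => (g t : ℂ)) with hf
  -- the map m ↦ m/2 tends to cocompact
  have hw : Tendsto (fun m : ℕ => (m:ℝ)/2) atTop (cocompact ℝ) := by
    rw [cocompact_eq_atBot_atTop]
    exact (tendsto_natCast_atTop_atTop.atTop_div_const two_pos).mono_right le_sup_right
  have h0 : Tendsto (fun m : ℕ => FourierTransform.fourier f ((m:ℝ)/2)) atTop (𝓝 0) :=
    (Real.zero_at_infty_fourier f).comp hw
  have h1 : Tendsto (fun m : ℕ => (FourierTransform.fourier f ((m:ℝ)/2)).im) atTop (𝓝 0) := by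
    have := (Complex.continuous_im.tendsto 0).comp h0
    exact this
  -- identify the imaginary part
  have key : ∀ m : ℕ, (FourierTransform.fourier f ((m:ℝ)/2)).im
      = -∫ t in (0:ℝ)..1, g t * Real.sin (m * π * t) := by
    intro m
    rw [Real.fourier_real_eq_integral_exp_smul]
    have hind : (fun v : ℝ => Complex.exp (↑(-2 * π * v * ((m:ℝ)/2)) * Complex.I) • f v)
        = (Set.Ioc (0:ℝ) 1).indicator
            (fun v => Complex.exp (↑(-2 * π * v * ((m:ℝ)/2)) * Complex.I) * (g v : ℂ)) := by
      funext v
      simp only [hf]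
      by_cases h : v ∈ Set.Ioc (0:ℝ) 1
      · rw [Set.indicator_of_mem h, Set.indicator_of_mem h, smul_eq_mul]
      · rw [Set.indicator_of_notMem h, Set.indicator_of_notMem h, smul_zero]
    rw [hind, integral_indicator measurableSet_Ioc]
    have hintg : Integrable
        (fun v => Complex.exp (↑(-2 * π * v * ((m:ℝ)/2)) * Complex.I) * (g v : ℂ))
        (volume.restrict (Set.Ioc (0:ℝ) 1)) := by
      apply Integrable.bdd_mul (c := 1) hgi.ofReal
      · apply Continuous.aestronglyMeasurable
        apply Complex.continuous_exp.comp
        exact (Complex.continuous_ofReal.comp (by fun_prop)).mul continuous_const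
      · refine ae_of_all _ fun v => ?_
        rw [Complex.norm_exp]
        simp
    have him := integral_im (𝕜 := ℂ) hintg
    simp only [RCLike.im_eq_complex_im] at him
    rw [← him]
    rw [intervalIntegral.integral_of_le zero_le_one, ← integral_neg]
    apply integral_congr_ae
    filter_upwards with v
    have : (-2 * π * v * ((m:ℝ)/2)) = -(m * π * v) := by ring
    rw [this]
    rw [Complex.exp_mul_I]
    simp only [add_mul, Complex.add_im, Complex.mul_im]
    push_cast
    simp only [mul_comm]
    simp [Complex.cos_neg, Complex.sin_neg, Complex.cos_ofReal_im, Complex.sin_ofReal_re,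
      Complex.cos_ofReal_re, Complex.sin_ofReal_im, Complex.ofReal_re, Complex.ofReal_im]
    rw [show (v:ℂ) * ((π:ℂ) * (m:ℂ)) = ((v * (π * m) : ℝ) : ℂ) by push_cast; ring,
      Complex.cos_ofReal_im, Complex.sin_ofReal_re]
    ring
  simp only [key] at h1
  have := h1.neg
  simpa using this

private lemma momentCoeff_eq (μ : ℝ → ℝ) (hcont : Continuous μ) (k : ℕ) (hk : 2 ≤ k) :
    momentCoeff μ k = (∫ x in (0:ℝ)..1, μ x * Real.cos ((k-1:ℕ) * π * x))
      - ∫ x in (0:ℝ)..1, μ x * Real.cos ((k+1:ℕ) * π * x) := by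
  have hcast : ((k-1:ℕ):ℝ) = (k:ℝ) - 1 := by
    have : (1:ℕ) ≤ k := by omega
    push_cast [Nat.cast_sub this]
    ring
  have hpt : ∀ x : ℝ, 2 * (μ x * Real.sin (π * x) * Real.sin (k * π * x))
      = μ x * Real.cos ((k-1:ℕ) * π * x) - μ x * Real.cos ((k+1:ℕ) * π * x) := by
    intro x
    rw [hcast]
    push_cast
    rw [show ((k:ℝ) - 1) * π * x = (k:ℝ) * π * x - π * x by ring,
      show ((k:ℝ) + 1) * π * x = (k:ℝ) * π * x + π * x by ring,
      Real.cos_sub, Real.cos_add]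
    ring
  have hInt : ∀ m : ℕ, IntervalIntegrable (fun x => μ x * Real.cos (m * π * x)) volume 0 1 :=
    fun m => (hcont.mul (Real.continuous_cos.comp (continuous_const.mul continuous_id))).intervalIntegrable 0 1
  rw [momentCoeff, ← intervalIntegral.integral_const_mul, ← intervalIntegral.integral_sub (hInt (k-1)) (hInt (k+1))]
  apply intervalIntegral.integral_congr
  intro x _
  exact hpt x

private lemma key_tendsto (μ g : ℝ → ℝ) (hμ2 : ContDiff ℝ 2 μ)
    (hgm : StronglyMeasurable g) (hgi : IntegrableOn g (Set.Ioc (0:ℝ) 1))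
    (heq : ∀ x ∈ Set.Icc (0:ℝ) 1, deriv (deriv μ) x = deriv (deriv μ) 0 + ∫ t in (0:ℝ)..x, g t) :
    Tendsto (fun k : ℕ => (k:ℝ)^3 * momentCoeff μ k
      - 4*((-1)^(k+1) * deriv μ 1 - deriv μ 0)/π^2) atTop (𝓝 0) := by
  have hπ := Real.pi_pos
  -- regularity
  have hμ2' : ContDiff ℝ ((1:WithTop ℕ∞)+1) μ := by
    have h12 : ((1:WithTop ℕ∞)+1) = 2 := by norm_num
    rw [h12]; exact hμ2
  have hd1 : Differentiable ℝ μ := hμ2.differentiable (by norm_num)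
  have hC1 : ContDiff ℝ (1:WithTop ℕ∞) (deriv μ) := (contDiff_succ_iff_deriv.mp hμ2').2.2
  have hC1' : ContDiff ℝ ((0:WithTop ℕ∞)+1) (deriv μ) := by
    have h01 : ((0:WithTop ℕ∞)+1) = 1 := by norm_num
    rw [h01]; exact hC1
  have hd2 : Differentiable ℝ (deriv μ) := hC1.differentiable one_ne_zero
  have hc2 : Continuous (deriv (deriv μ)) :=
    ((contDiff_succ_iff_deriv.mp hC1').2.2).continuous
  set d0 := deriv μ 0
  set d1 := deriv μ 1
  set S : ℕ → ℝ := fun m => ∫ t in (0:ℝ)..1, g t * Real.sin (m * π * t) with hS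
  -- value of the cosine coefficients
  have hC : ∀ m : ℕ, 1 ≤ m → ∫ x in (0:ℝ)..1, μ x * Real.cos (m * π * x)
      = ((-1)^m * d1 - d0) / ((m:ℝ)^2 * π^2) + S m / ((m:ℝ)^3 * π^3) := by
    intro m hm
    have hm' : (1:ℝ) ≤ (m:ℝ) := by exact_mod_cast hm
    rw [ibp_mu μ hd1 hd2 hc2 m hm, second_deriv_int μ g hc2 hgm hgi heq m hm]
    have h1 : ((m:ℝ)) ≠ 0 := by positivity
    have h2 : π ≠ 0 := ne_of_gt hπ
    field_simp
    ring
  -- auxiliary limits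
  have hr : Tendsto (fun k : ℕ => (k:ℝ)/((k:ℝ)-1)) atTop (𝓝 1) := by
    have h1 : Tendsto (fun k : ℕ => (k:ℝ)-1) atTop atTop := by
      simpa [sub_eq_add_neg] using
        tendsto_atTop_add_const_right atTop (-1:ℝ) tendsto_natCast_atTop_atTop
    have h2 : Tendsto (fun k : ℕ => 1 + ((k:ℝ)-1)⁻¹) atTop (𝓝 (1+0)) :=
      tendsto_const_nhds.add h1.inv_tendsto_atTop
    rw [show (1:ℝ) + 0 = 1 by ring] at h2
    apply h2.congr'
    filter_upwards [eventually_ge_atTop 2] with k hk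
    have : (k:ℝ) - 1 ≠ 0 := by
      have : (2:ℝ) ≤ (k:ℝ) := by exact_mod_cast hk
      linarith
    field_simp
    ring
  have hs : Tendsto (fun k : ℕ => (k:ℝ)/((k:ℝ)+1)) atTop (𝓝 1) := by
    have h1 : Tendsto (fun k : ℕ => (k:ℝ)+1) atTop atTop :=
      tendsto_atTop_add_const_right atTop (1:ℝ) tendsto_natCast_atTop_atTop
    have h2 : Tendsto (fun k : ℕ => 1 - ((k:ℝ)+1)⁻¹) atTop (𝓝 (1-0)) :=
      tendsto_const_nhds.sub h1.inv_tendsto_atTop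
    rw [show (1:ℝ) - 0 = 1 by ring] at h2
    apply h2.congr
    intro k
    have : (k:ℝ) + 1 ≠ 0 := by positivity
    field_simp
    ring
  have hS0 : Tendsto S atTop (𝓝 0) := riemann_lebesgue g hgm hgi
  have hSm : Tendsto (fun k : ℕ => S (k-1)) atTop (𝓝 0) :=
    hS0.comp (tendsto_sub_atTop_nat 1)
  have hSp : Tendsto (fun k : ℕ => S (k+1)) atTop (𝓝 0) :=
    hS0.comp (tendsto_add_atTop_nat 1)
  -- the three pieces
  have hT2 : Tendsto (fun k : ℕ => ((k:ℝ)/((k:ℝ)-1))^3 * S (k-1) / π^3) atTop (𝓝 0) := by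
    have := ((hr.pow 3).mul hSm).div_const (π^3)
    simpa using this
  have hT3 : Tendsto (fun k : ℕ => ((k:ℝ)/((k:ℝ)+1))^3 * S (k+1) / π^3) atTop (𝓝 0) := by
    have := ((hs.pow 3).mul hSp).div_const (π^3)
    simpa using this
  have hT1 : Tendsto (fun k : ℕ =>
      ((-1:ℝ)^(k+1) * d1 - d0) * (4*((((k:ℝ)/((k:ℝ)-1))^2 * ((k:ℝ)/((k:ℝ)+1))^2) - 1)/π^2))
      atTop (𝓝 0) := by
    have hz : Tendsto (fun k : ℕ =>
        (|d1| + |d0|) * |4*((((k:ℝ)/((k:ℝ)-1))^2 * ((k:ℝ)/((k:ℝ)+1))^2) - 1)/π^2|)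
        atTop (𝓝 0) := by
      have h1 : Tendsto (fun k : ℕ =>
          4*((((k:ℝ)/((k:ℝ)-1))^2 * ((k:ℝ)/((k:ℝ)+1))^2) - 1)/π^2) atTop (𝓝 0) := by
        have := ((((hr.pow 2).mul (hs.pow 2)).sub tendsto_const_nhds (b := (1:ℝ))).const_mul
          (4:ℝ)).div_const (π^2)
        simpa using this
      have := (h1.abs.const_mul (|d1| + |d0|))
      simpa using this
    apply squeeze_zero_norm _ hz
    intro k
    rw [norm_mul]
    apply mul_le_mul_of_nonneg_right _ (norm_nonneg _)
    rw [Real.norm_eq_abs]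
    calc |(-1:ℝ)^(k+1) * d1 - d0| ≤ |(-1:ℝ)^(k+1) * d1| + |d0| := by
          simpa [sub_eq_add_neg] using abs_add_le ((-1:ℝ)^(k+1) * d1) (-d0)
      _ = |d1| + |d0| := by simp [abs_mul, abs_pow]
  -- eventual identity
  have hev : ∀ᶠ k : ℕ in atTop, (k:ℝ)^3 * momentCoeff μ k - 4*((-1)^(k+1) * d1 - d0)/π^2
      = ((-1:ℝ)^(k+1) * d1 - d0) * (4*((((k:ℝ)/((k:ℝ)-1))^2 * ((k:ℝ)/((k:ℝ)+1))^2) - 1)/π^2)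
        + ((k:ℝ)/((k:ℝ)-1))^3 * S (k-1) / π^3 - ((k:ℝ)/((k:ℝ)+1))^3 * S (k+1) / π^3 := by
    filter_upwards [eventually_ge_atTop 2] with k hk
    have hk1 : 1 ≤ k - 1 := by omega
    have hkp : 1 ≤ k + 1 := by omega
    have hcastm : ((k-1:ℕ):ℝ) = (k:ℝ) - 1 := by
      have h1 : (1:ℕ) ≤ k := by omega
      push_cast [Nat.cast_sub h1]; ring
    have hcastp : ((k+1:ℕ):ℝ) = (k:ℝ) + 1 := by push_cast; ring
    have hsgn : ((-1:ℝ))^(k-1) = ((-1:ℝ))^(k+1) := by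
      rw [show k+1 = (k-1)+2 by omega, pow_add]
      norm_num
    have hμcont : Continuous μ := hμ2.continuous
    rw [momentCoeff_eq μ hμcont k hk, hC (k-1) hk1, hC (k+1) hkp]
    rw [hcastm, hcastp, hsgn]
    have hk2 : (2:ℝ) ≤ (k:ℝ) := by exact_mod_cast hk
    have hne1 : (k:ℝ) - 1 ≠ 0 := by linarith
    have hne2 : (k:ℝ) + 1 ≠ 0 := by linarith
    have hne3 : π ≠ 0 := ne_of_gt hπ
    field_simp
    ring
  rw [Filter.tendsto_congr' hev]
  have := (hT1.add hT2).sub hT3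
  simpa using this

/-- If `μ ∈ H³` with `μ'(0) + μ'(1) ≠ 0` and `μ'(0) − μ'(1) ≠ 0`, then only finitely many
coefficients `⟨μφ₁,φ_k⟩` vanish, and there is `c > 0` with `|⟨μφ₁,φ_k⟩| ≥ c/k³` for all `k`
outside this finite set. -/
theorem finitely_many_vanishing_coefficients (μ : ℝ → ℝ) (hμ : IsH3 μ)
    (hplus : deriv μ 0 + deriv μ 1 ≠ 0) (hminus : deriv μ 0 - deriv μ 1 ≠ 0) :
    {k : ℕ | 0 < k ∧ momentCoeff μ k = 0}.Finite ∧
    ∃ c > 0, ∀ k : ℕ, 0 < k → k ∉ {k : ℕ | 0 < k ∧ momentCoeff μ k = 0} →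
      c / (k : ℝ) ^ 3 ≤ |momentCoeff μ k| := by
  classical
  have hπ := Real.pi_pos
  obtain ⟨hμ2, g0, hg2, heq0⟩ := hμ
  -- replace g0 by a globally measurable representative
  set g : ℝ → ℝ := (Set.Ioc (0:ℝ) 1).indicator (hg2.aestronglyMeasurable.mk g0) with hgdef
  have hgm : StronglyMeasurable g :=
    hg2.aestronglyMeasurable.stronglyMeasurable_mk.indicator measurableSet_Ioc
  have hgae : g =ᵐ[volume.restrict (Set.Ioc (0:ℝ) 1)] g0 := by
    have h1 : (Set.Ioc (0:ℝ) 1).indicator (hg2.aestronglyMeasurable.mk g0)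
        =ᵐ[volume.restrict (Set.Ioc (0:ℝ) 1)] hg2.aestronglyMeasurable.mk g0 :=
      indicator_ae_eq_restrict (f := hg2.aestronglyMeasurable.mk g0) measurableSet_Ioc
    exact h1.trans hg2.aestronglyMeasurable.ae_eq_mk.symm
  have hg0i : IntegrableOn g0 (Set.Ioc (0:ℝ) 1) := by
    apply MemLp.integrable _ hg2
    norm_num
  have hgi : IntegrableOn g (Set.Ioc (0:ℝ) 1) := hg0i.congr hgae.symm
  have heq : ∀ x ∈ Set.Icc (0:ℝ) 1,
      deriv (deriv μ) x = deriv (deriv μ) 0 + ∫ t in (0:ℝ)..x, g t := by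
    intro x hx
    rw [heq0 x hx]
    congr 1
    rw [intervalIntegral.integral_of_le hx.1, intervalIntegral.integral_of_le hx.1]
    apply integral_congr_ae
    exact ae_restrict_of_ae_restrict_of_subset (Set.Ioc_subset_Ioc le_rfl hx.2) hgae.symm
  -- the limit
  have hkey := key_tendsto μ g hμ2 hgm hgi heq
  set d0 := deriv μ 0
  set d1 := deriv μ 1
  set L : ℕ → ℝ := fun k => 4*((-1)^(k+1) * d1 - d0)/π^2 with hL
  set δ : ℝ := 4 * min |d1 + d0| |d1 - d0| / π^2 with hδ
  have hδpos : 0 < δ := by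
    rw [hδ]
    apply div_pos _ (by positivity)
    apply mul_pos (by norm_num)
    apply lt_min
    · rw [abs_pos]; intro h; apply hplus; linarith
    · rw [abs_pos]; intro h; apply hminus; linarith
  have hLlb : ∀ k : ℕ, δ ≤ |L k| := by
    intro k
    rw [hL, hδ]
    simp only []
    rw [abs_div, abs_mul]
    rw [abs_of_pos (show (0:ℝ) < π^2 by positivity)]
    apply div_le_div_of_nonneg_right _ (by positivity)
    rw [show |(4:ℝ)| = 4 by norm_num] at *
    apply mul_le_mul_of_nonneg_left _ (by norm_num)
    rcases Nat.even_or_odd k with hpar | hpar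
    · have : ((-1:ℝ))^(k+1) = -1 := (hpar.add_one).neg_one_pow
      rw [this]
      calc min |d1 + d0| |d1 - d0| ≤ |d1 + d0| := min_le_left _ _
        _ = |(-1) * d1 - d0| := by rw [show (-1) * d1 - d0 = -(d1 + d0) by ring, abs_neg]
    · have : ((-1:ℝ))^(k+1) = 1 := (hpar.add_one).neg_one_pow
      rw [this]
      calc min |d1 + d0| |d1 - d0| ≤ |d1 - d0| := min_le_right _ _
        _ = |1 * d1 - d0| := by rw [one_mul]
  -- eventually the coefficient is large
  obtain ⟨N, hN⟩ := (Metric.tendsto_atTop.mp hkey) (δ/2) (by positivity)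
  have hbig : ∀ k : ℕ, N ≤ k → 1 ≤ k → δ/2 ≤ (k:ℝ)^3 * |momentCoeff μ k| := by
    intro k hk _
    have h1 := hN k hk
    rw [Real.dist_eq, sub_zero] at h1
    have h2 : |L k| - |(k:ℝ)^3 * momentCoeff μ k - L k| ≤ |(k:ℝ)^3 * momentCoeff μ k| := by
      have := abs_sub_abs_le_abs_sub (L k) ((k:ℝ)^3 * momentCoeff μ k)
      have h3 : |L k - (k:ℝ)^3 * momentCoeff μ k| = |(k:ℝ)^3 * momentCoeff μ k - L k| :=
        abs_sub_comm _ _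
      linarith
    have h4 := hLlb k
    have h5 : |(k:ℝ)^3 * momentCoeff μ k| = (k:ℝ)^3 * |momentCoeff μ k| := by
      rw [abs_mul, abs_of_nonneg (by positivity : (0:ℝ) ≤ (k:ℝ)^3)]
    linarith [h5 ▸ h2]
  set N' : ℕ := max N 1 with hN'
  have hnonzero : ∀ k : ℕ, N' ≤ k → momentCoeff μ k ≠ 0 := by
    intro k hk h0
    have h1 : 1 ≤ k := le_trans (le_max_right N 1) hk
    have := hbig k (le_trans (le_max_left N 1) hk) h1
    rw [h0] at this
    simp at this
    nlinarith
  constructor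
  · apply Set.Finite.subset (Set.finite_Iio N')
    intro k hk
    simp only [Set.mem_setOf_eq] at hk
    simp only [Set.mem_Iio]
    by_contra h
    exact hnonzero k (not_lt.mp h) hk.2
  · -- construct the constant
    set F : Finset ℕ := (Finset.range N').filter (fun k => 0 < k ∧ momentCoeff μ k ≠ 0) with hF
    have main : ∀ c : ℝ, 0 < c → c ≤ δ/2 →
        (∀ k ∈ F, c ≤ (k:ℝ)^3 * |momentCoeff μ k|) →
        (∃ c > 0, ∀ k : ℕ, 0 < k → k ∉ {k : ℕ | 0 < k ∧ momentCoeff μ k = 0} →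
          c / (k : ℝ) ^ 3 ≤ |momentCoeff μ k|) := by
      intro c hc hcδ hcF
      refine ⟨c, hc, fun k hk hknot => ?_⟩
      have hkR : (0:ℝ) < (k:ℝ)^3 := by
        have : (0:ℝ) < (k:ℝ) := by exact_mod_cast hk
        positivity
      have hne : momentCoeff μ k ≠ 0 := by
        intro h; exact hknot ⟨hk, h⟩
      rw [div_le_iff₀ hkR]
      rcases le_or_gt N' k with hge | hlt
      · have := hbig k (le_trans (le_max_left N 1) hge) (le_trans (le_max_right N 1) hge)
        nlinarith
      · have hkF : k ∈ F := by
          rw [hF, Finset.mem_filter, Finset.mem_range]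
          exact ⟨hlt, hk, hne⟩
        have := hcF k hkF
        nlinarith
    by_cases hFne : F.Nonempty
    · set b := F.inf' hFne (fun k => (k:ℝ)^3 * |momentCoeff μ k|) with hb
      have hbpos : 0 < b := by
        rw [hb, Finset.lt_inf'_iff]
        intro k hk
        rw [hF, Finset.mem_filter] at hk
        have h1 : (0:ℝ) < (k:ℝ)^3 := by
          have : (0:ℝ) < (k:ℝ) := by exact_mod_cast hk.2.1
          positivity
        have h2 : 0 < |momentCoeff μ k| := abs_pos.mpr hk.2.2
        positivity
      apply main (min (δ/2) b) (lt_min (by positivity) hbpos) (min_le_left _ _)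
      intro k hk
      exact le_trans (min_le_right _ _) (Finset.inf'_le _ hk)
    · apply main (δ/2) (by positivity) le_rfl
      intro k hk
      exact absurd ⟨k, hk⟩ hFne
end

section
/- Let μ ∈ H³((0,1),ℝ) and K ∈ ℕ*. Then Σ_{j=1}^∞ (λ_j − (λ₁+λ_K)/2) ⟨μφ₁,φ_j⟩⟨μφ_K,φ_j⟩ = ⟨(μ')²φ₁, φ_K⟩, where λ_j = (jπ)² and the series converges absolutely. -/
open Real MeasureTheory

/-- Eigenvalues `λ_k = (kπ)²` of the Dirichlet Laplacian. -/
noncomputable def lam (k : ℕ) : ℝ := ((k : ℝ) * Real.pi) ^ 2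

/-- `⟨μφ_m,φ_j⟩ = 2∫₀¹ μ(x) sin(mπx) sin(jπx) dx`. -/
noncomputable def matCoeff (μ : ℝ → ℝ) (m j : ℕ) : ℝ :=
  2 * ∫ x in (0:ℝ)..1, μ x * Real.sin (m * Real.pi * x) * Real.sin (j * Real.pi * x)

/-!
Write `F_m x = μ x sin(mπx)`, which vanishes at `0` and `1`. Two integrations by parts give
`⟨F'', φ_j⟩ = -λ_j ⟨F, φ_j⟩`, so Parseval's identity for the sine basis turns
`Σ_j λ_j ⟨F_1, φ_j⟩⟨F_K, φ_j⟩` into `∫ F_1' F_K'`. That identity comes from Parseval's identity for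
Fourier series on `(-1, 1]` applied to odd extensions, plus polarization. Expanding
`F_1' F_K' - (λ_1 + λ_K)/2 · F_1 F_K` leaves `μ'² sin(πx) sin(Kπx)` plus the derivative of
`μ² (sin(πx) sin(Kπx))' / 2`, which vanishes at both ends. Absolute convergence is free: a summable
real series is absolutely summable.
-/

open Set

/-- `⟨f, φ_n⟩ = √2 · sineCoeff f n`. -/
noncomputable def sineCoeff (f : ℝ → ℝ) (n : ℤ) : ℝ :=
  ∫ x in (0:ℝ)..1, f x * sin (n * π * x)

section SineCoeff

variable {f g : ℝ → ℝ}

theorem sineCoeff_neg (f : ℝ → ℝ) (n : ℤ) : sineCoeff f (-n) = -sineCoeff f n := by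
  simp [sineCoeff, neg_mul, ← intervalIntegral.integral_neg]

theorem sineCoeff_zero (f : ℝ → ℝ) : sineCoeff f 0 = 0 := by
  simp [sineCoeff]

theorem IntervalIntegrable.mul_sin (hf : IntervalIntegrable f volume 0 1) (n : ℤ) :
    IntervalIntegrable (fun x => f x * sin (n * π * x)) volume 0 1 :=
  hf.mul_continuousOn (by fun_prop)

theorem sineCoeff_add (hf : IntervalIntegrable f volume 0 1)
    (hg : IntervalIntegrable g volume 0 1) (n : ℤ) :
    sineCoeff (f + g) n = sineCoeff f n + sineCoeff g n := by
  simp only [sineCoeff, Pi.add_apply, add_mul]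
  exact intervalIntegral.integral_add (hf.mul_sin n) (hg.mul_sin n)

theorem sineCoeff_sub (hf : IntervalIntegrable f volume 0 1)
    (hg : IntervalIntegrable g volume 0 1) (n : ℤ) :
    sineCoeff (f - g) n = sineCoeff f n - sineCoeff g n := by
  simp only [sineCoeff, Pi.sub_apply, sub_mul]
  exact intervalIntegral.integral_sub (hf.mul_sin n) (hg.mul_sin n)

end SineCoeff

noncomputable def oddExt (f : ℝ → ℝ) (x : ℝ) : ℝ := if 0 < x then f x else -f (-x)

section OddExt

variable {f : ℝ → ℝ}

theorem oddExt_of_pos {x : ℝ} (hx : 0 < x) : oddExt f x = f x := if_pos hx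

theorem oddExt_of_nonpos {x : ℝ} (hx : x ≤ 0) : oddExt f x = -f (-x) := if_neg hx.not_gt

theorem abs_oddExt (x : ℝ) : |oddExt f x| = |f (|x|)| := by
  rcases lt_or_ge 0 x with hx | hx
  · rw [oddExt_of_pos hx, abs_of_pos hx]
  · rw [oddExt_of_nonpos hx, abs_neg, abs_of_nonpos hx]

theorem measurable_oddExt (hf : Measurable f) : Measurable (oddExt f) :=
  Measurable.ite measurableSet_Ioi hf (hf.comp measurable_neg).neg

theorem integral_neg_to_self_eq_add_comp_neg {E : Type*} [NormedAddCommGroup E] [NormedSpace ℝ E]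
    {v : ℝ → E} {c : ℝ} (hv : IntervalIntegrable v volume (-c) c) :
    ∫ x in -c..c, v x = (∫ x in 0..c, v x) + ∫ x in 0..c, v (-x) := by
  have h0 : (0 : ℝ) ∈ uIcc (-c) c := by
    rcases le_total 0 c with h | h <;> exact ⟨by simp [h], by simp [h]⟩
  rw [← intervalIntegral.integral_add_adjacent_intervals
    (hv.mono_set (uIcc_subset_uIcc_left h0)) (hv.mono_set (uIcc_subset_uIcc_right h0)),
    intervalIntegral.integral_comp_neg, neg_zero, add_comm]

theorem intervalIntegrable_oddExt_smul {E : Type*} [NormedAddCommGroup E] [NormedSpace ℝ E]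
    {h : ℝ → E} (hf : Continuous f) (hh : Continuous h) :
    IntervalIntegrable (fun x => oddExt f x • h x) volume (-1) 1 := by
  refine IntervalIntegrable.trans (b := 0) ?_ ?_
  · refine (intervalIntegrable_congr (g := fun x => (-f (-x)) • h x) fun x hx => ?_).mpr
      ((by fun_prop : Continuous _).intervalIntegrable _ _)
    rw [uIoc_of_le (by norm_num)] at hx
    simp only [oddExt_of_nonpos hx.2]
  · refine (intervalIntegrable_congr (g := fun x => f x • h x) fun x hx => ?_).mpr
      ((by fun_prop : Continuous _).intervalIntegrable _ _)
    rw [uIoc_of_le zero_le_one] at hx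
    simp only [oddExt_of_pos hx.1]

theorem integral_oddExt_smul {E : Type*} [NormedAddCommGroup E] [NormedSpace ℝ E]
    {h : ℝ → E} (hf : Continuous f) (hh : Continuous h) :
    ∫ x in -1..1, oddExt f x • h x = ∫ x in 0..1, f x • (h x - h (-x)) := by
  have on_pos : ∫ x in 0..1, oddExt f x • h x = ∫ x in 0..1, f x • h x := by
    refine intervalIntegral.integral_congr_ae (Filter.Eventually.of_forall fun x hx => ?_)
    rw [uIoc_of_le zero_le_one] at hx
    rw [oddExt_of_pos hx.1]
  have on_neg : ∫ x in 0..1, oddExt f (-x) • h (-x) = -∫ x in 0..1, f x • h (-x) := by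
    rw [← intervalIntegral.integral_neg]
    refine intervalIntegral.integral_congr_ae (Filter.Eventually.of_forall fun x hx => ?_)
    rw [uIoc_of_le zero_le_one] at hx
    rw [oddExt_of_nonpos (neg_nonpos.2 hx.1.le), neg_neg, neg_smul]
  simp only [smul_sub]
  rw [integral_neg_to_self_eq_add_comp_neg (intervalIntegrable_oddExt_smul hf hh), on_pos, on_neg,
    intervalIntegral.integral_sub ((by fun_prop : Continuous _).intervalIntegrable _ _)
      ((by fun_prop : Continuous _).intervalIntegrable _ _), sub_eq_add_neg]

end OddExt

section Parseval

variable {f g : ℝ → ℝ}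

theorem memLp_oddExt (hf : Continuous f) :
    MemLp (fun x => (oddExt f x : ℂ)) 2 (volume.restrict (Ioc (-1) 1)) := by
  obtain ⟨C, hC⟩ := isCompact_Icc.exists_bound_of_continuousOn (hf.continuousOn (s := Icc 0 1))
  refine MemLp.of_bound
    (Complex.measurable_ofReal.comp (measurable_oddExt hf.measurable)).aestronglyMeasurable C ?_
  filter_upwards [ae_restrict_mem measurableSet_Ioc] with x hx
  rw [Complex.norm_real, Real.norm_eq_abs, abs_oddExt, ← Real.norm_eq_abs]
  exact hC _ ⟨abs_nonneg x, abs_le.2 ⟨hx.1.le, hx.2⟩⟩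

theorem fourier_sub_fourier_neg (n : ℤ) (x : ℝ) :
    fourier (-n) (x : AddCircle (1 - -1 : ℝ))
        - fourier (-n) ((-x : ℝ) : AddCircle (1 - -1 : ℝ))
      = sin (n * π * x) • (-2 * Complex.I) := by
  have h := Complex.two_sin (n * π * x)
  simp only [fourier_coe_apply, Complex.real_smul, Complex.ofReal_sin]
  push_cast
  have e₁ : 2 * (π : ℂ) * Complex.I * -n * x / (1 - -1) = -(n * π * x) * Complex.I := by ring
  have e₂ : 2 * (π : ℂ) * Complex.I * -n * -x / (1 - -1) = n * π * x * Complex.I := by ring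
  rw [e₁, e₂]
  linear_combination Complex.I * h + (Complex.exp (-(n * π * x) * Complex.I)
    - Complex.exp (n * π * x * Complex.I)) * Complex.I_sq

theorem fourierCoeffOn_oddExt (hf : Continuous f) (n : ℤ) :
    fourierCoeffOn (by norm_num : (-1 : ℝ) < 1) (fun x => (oddExt f x : ℂ)) n
      = -Complex.I * sineCoeff f n := by
  have hcont : Continuous fun x : ℝ => fourier (-n) (x : AddCircle (1 - -1 : ℝ)) :=
    (fourier (-n)).continuous.comp (AddCircle.continuous_mk' _)
  simp_rw [fourierCoeffOn_eq_integral, smul_eq_mul, mul_comm _ (oddExt f _ : ℂ),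
    ← Complex.real_smul, integral_oddExt_smul hf hcont, fourier_sub_fourier_neg, smul_smul,
    intervalIntegral.integral_smul_const, sineCoeff, Complex.real_smul]
  push_cast
  ring

theorem hasSum_sq_sineCoeff (hf : Continuous f) :
    HasSum (fun n : ℕ => 2 * sineCoeff f (n + 1) ^ 2) (∫ x in 0..1, f x ^ 2) := by
  have H := hasSum_sq_fourierCoeffOn (by norm_num : (-1 : ℝ) < 1) (memLp_oddExt hf)
  have h_coeff : ∀ n : ℤ, ‖fourierCoeffOn (by norm_num : (-1 : ℝ) < 1)
      (fun x => (oddExt f x : ℂ)) n‖ ^ 2 = sineCoeff f n ^ 2 := by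
    intro n
    rw [fourierCoeffOn_oddExt hf, norm_mul, norm_neg, Complex.norm_I, one_mul, Complex.norm_real,
      Real.norm_eq_abs, sq_abs]
  have h_norm :
      ((1 : ℝ) - -1)⁻¹ • ∫ x in -1..1, ‖(oddExt f x : ℂ)‖ ^ 2
        = ∫ x in 0..1, f x ^ 2 := by
    have h_even : ∀ x, ‖(oddExt f x : ℂ)‖ ^ 2 = f |x| ^ 2 := fun x => by
      rw [Complex.norm_real, Real.norm_eq_abs, abs_oddExt, sq_abs]
    simp_rw [h_even]
    rw [integral_neg_to_self_eq_add_comp_neg ((by fun_prop : Continuous _).intervalIntegrable _ _)]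
    have h_abs : ∫ x in 0..1, f |x| ^ 2 = ∫ x in 0..1, f x ^ 2 :=
      intervalIntegral.integral_congr fun x hx => by
        rw [uIcc_of_le zero_le_one] at hx
        rw [abs_of_nonneg hx.1]
    simp only [abs_neg, h_abs, smul_eq_mul]
    ring
  simp_rw [h_coeff, h_norm] at H
  have H' := H.nat_add_neg
  simp only [sineCoeff_neg, neg_sq, sineCoeff_zero, ← two_mul] at H'
  simpa [sineCoeff_zero] using (hasSum_nat_add_iff' 1).mpr H'

theorem hasSum_sineCoeff_mul (hf : Continuous f) (hg : Continuous g) :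
    HasSum (fun n : ℕ => 2 * (sineCoeff f (n + 1) * sineCoeff g (n + 1)))
      (∫ x in 0..1, f x * g x) := by
  have hf' := hf.intervalIntegrable (μ := volume) 0 1
  have hg' := hg.intervalIntegrable (μ := volume) 0 1
  have H := ((hasSum_sq_sineCoeff (hf.add hg)).sub (hasSum_sq_sineCoeff (hf.sub hg))).div_const 4
  simp only [sineCoeff_add hf' hg', sineCoeff_sub hf' hg'] at H
  have h_polar : ((∫ x in 0..1, (f + g) x ^ 2) - ∫ x in 0..1, (f - g) x ^ 2) / 4
      = ∫ x in 0..1, f x * g x := by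
    rw [← intervalIntegral.integral_sub
      ((by fun_prop : Continuous fun x => (f + g) x ^ 2).intervalIntegrable _ _)
      ((by fun_prop : Continuous fun x => (f - g) x ^ 2).intervalIntegrable _ _),
      ← intervalIntegral.integral_div]
    congr 1; ext x; simp only [Pi.add_apply, Pi.sub_apply]; ring
  rw [h_polar] at H
  exact H.congr_fun fun n => by ring

end Parseval

section Green

variable {F G : ℝ → ℝ}

theorem ContDiff.hasDerivAt_deriv_deriv (hF : ContDiff ℝ 2 F) (x : ℝ) :
    HasDerivAt (deriv F) (deriv (deriv F) x) x :=
  ((hF.deriv' (n := 1)).differentiable one_ne_zero x).hasDerivAt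

theorem ContDiff.continuous_deriv_deriv (hF : ContDiff ℝ 2 F) : Continuous (deriv (deriv F)) :=
  (hF.deriv' (n := 1)).continuous_deriv le_rfl

theorem sineCoeff_deriv_deriv (hF : ContDiff ℝ 2 F) (h0 : F 0 = 0) (h1 : F 1 = 0) (n : ℤ) :
    sineCoeff (deriv (deriv F)) n = -(n * π) ^ 2 * sineCoeff F n := by
  set ω : ℝ := n * π
  have hH : ∀ x, HasDerivAt (fun y => deriv F y * sin (ω * y) - ω * (F y * cos (ω * y)))
      (deriv (deriv F) x * sin (ω * x) + ω ^ 2 * (F x * sin (ω * x))) x := by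
    intro x
    have hω : HasDerivAt (fun y => ω * y) ω x := by simpa using (hasDerivAt_id x).const_mul ω
    have hF' := ((hF.differentiable two_ne_zero) x).hasDerivAt
    refine (((hF.hasDerivAt_deriv_deriv x).fun_mul hω.sin).fun_sub
      ((hF'.fun_mul hω.cos).const_mul ω)).congr_deriv ?_
    ring
  have hFTC := intervalIntegral.integral_eq_sub_of_hasDerivAt (fun x _ => hH x)
    ((by fun_prop : Continuous fun x =>
      deriv (deriv F) x * sin (ω * x) + ω ^ 2 * (F x * sin (ω * x))).intervalIntegrable 0 1)
  rw [intervalIntegral.integral_add ((by fun_prop : Continuous _).intervalIntegrable _ _)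
    ((by fun_prop : Continuous _).intervalIntegrable _ _),
    intervalIntegral.integral_const_mul] at hFTC
  simp only [mul_one, mul_zero, sin_zero, h0, h1, sin_int_mul_pi, ω] at hFTC
  unfold sineCoeff
  linarith

theorem hasSum_lam_mul_sineCoeff (hF : ContDiff ℝ 2 F) (hG : ContDiff ℝ 1 G) (hF0 : F 0 = 0)
    (hF1 : F 1 = 0) (hG0 : G 0 = 0) (hG1 : G 1 = 0) :
    HasSum (fun n : ℕ => 2 * lam (n + 1) * (sineCoeff F (n + 1) * sineCoeff G (n + 1)))
      (∫ x in 0..1, deriv F x * deriv G x) := by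
  have H := (hasSum_sineCoeff_mul hF.continuous_deriv_deriv hG.continuous).neg
  have h_ibp : ∫ x in 0..1, deriv (deriv F) x * G x = -∫ x in 0..1, deriv F x * deriv G x := by
    have := intervalIntegral.integral_mul_deriv_eq_deriv_mul
      (fun x _ => ((hG.differentiable one_ne_zero) x).hasDerivAt)
      (fun x _ => hF.hasDerivAt_deriv_deriv x)
      ((hG.continuous_deriv le_rfl).intervalIntegrable 0 1)
      (hF.continuous_deriv_deriv.intervalIntegrable 0 1)
    simp only [hG0, hG1, zero_mul, sub_zero, zero_sub] at this
    simp only [mul_comm (deriv (deriv F) _), mul_comm (deriv F _), this]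
  rw [h_ibp, neg_neg] at H
  refine H.congr_fun fun n => ?_
  rw [sineCoeff_deriv_deriv hF hF0 hF1, lam]
  push_cast
  ring

end Green

section MulSin

variable {μ : ℝ → ℝ}

theorem hasDerivAt_mul_sin {x : ℝ} {c : ℝ} (hμ : HasDerivAt μ c x) (ω : ℝ) :
    HasDerivAt (fun y => μ y * sin (ω * y))
      (c * sin (ω * x) + ω * (μ x * cos (ω * x))) x := by
  have hω : HasDerivAt (fun y => ω * y) ω x := by simpa using (hasDerivAt_id x).const_mul ω
  exact (hμ.fun_mul hω.sin).congr_deriv (by ring)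

theorem integral_deriv_mul_sin_mul_deriv_mul_sin (hμ : ContDiff ℝ 1 μ) (m k : ℕ) :
    2 * (∫ x in 0..1, deriv (fun y => μ y * sin (m * π * y)) x
        * deriv (fun y => μ y * sin (k * π * y)) x)
      - (lam m + lam k) * ∫ x in 0..1, μ x * sin (m * π * x) * (μ x * sin (k * π * x))
    = 2 * ∫ x in 0..1, deriv μ x ^ 2 * sin (m * π * x) * sin (k * π * x) := by
  set a : ℝ := m * π
  set b : ℝ := k * π
  have hd : ∀ x, HasDerivAt μ (deriv μ x) x :=
    fun x => ((hμ.differentiable one_ne_zero) x).hasDerivAt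
  have hc : Continuous (deriv μ) := hμ.continuous_deriv le_rfl
  have hμc : Continuous μ := hμ.continuous
  simp_rw [(hasDerivAt_mul_sin (hd _) _).deriv]
  set V' : ℝ → ℝ := fun x => μ x * deriv μ x * (a * cos (a * x) * sin (b * x)
    + b * sin (a * x) * cos (b * x))
      + μ x ^ 2 * (a * b * cos (a * x) * cos (b * x)
        - (a ^ 2 + b ^ 2) / 2 * sin (a * x) * sin (b * x))
  have hV : ∀ x, HasDerivAt (fun y => μ y * (μ y * (a * cos (a * y) * sin (b * y)
      + b * sin (a * y) * cos (b * y))) / 2) (V' x) x := by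
    intro x
    have ha : HasDerivAt (fun y => a * y) a x := by simpa using (hasDerivAt_id x).const_mul a
    have hb : HasDerivAt (fun y => b * y) b x := by simpa using (hasDerivAt_id x).const_mul b
    refine (((hd x).fun_mul ((hd x).fun_mul (((ha.cos.const_mul a).fun_mul hb.sin).fun_add
      ((ha.sin.const_mul b).fun_mul hb.cos)))).div_const 2).congr_deriv ?_
    ring
  have integrable : ∀ {g : ℝ → ℝ}, Continuous g → IntervalIntegrable g volume 0 1 :=
    fun hg => hg.intervalIntegrable 0 1
  have hFTC :=
    intervalIntegral.integral_eq_sub_of_hasDerivAt (fun x _ => hV x) (integrable (by fun_prop))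
  have hsa : sin a = 0 := sin_nat_mul_pi m
  have hsb : sin b = 0 := sin_nat_mul_pi k
  simp only [mul_zero, mul_one, sin_zero, hsa, hsb, zero_mul, add_zero, zero_div, sub_zero]
    at hFTC
  have hlam : lam m + lam k = a ^ 2 + b ^ 2 := by simp only [lam, a, b]
  calc _ = ∫ x in 0..1, (2 * (deriv μ x ^ 2 * sin (a * x) * sin (b * x)) + 2 * V' x) := by
        rw [hlam, ← intervalIntegral.integral_const_mul, ← intervalIntegral.integral_const_mul,
          ← intervalIntegral.integral_sub (integrable (by fun_prop)) (integrable (by fun_prop))]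
        congr 1; ext x; ring
    _ = _ := by
        rw [intervalIntegral.integral_add (integrable (by fun_prop)) (integrable (by fun_prop)),
          intervalIntegral.integral_const_mul, intervalIntegral.integral_const_mul, hFTC,
          mul_zero, add_zero]

end MulSin

theorem hasSum_lam_sub_mul_matCoeff {μ : ℝ → ℝ} (hμ : ContDiff ℝ 2 μ) (m k : ℕ) :
    HasSum (fun j : ℕ =>
        (lam (j + 1) - (lam m + lam k) / 2) * matCoeff μ m (j + 1) * matCoeff μ k (j + 1))
      (2 * ∫ x in 0..1, deriv μ x ^ 2 * sin (m * π * x) * sin (k * π * x)) := by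
  let F : ℕ → ℝ → ℝ := fun m x => μ x * sin (m * π * x)
  have hF : ∀ m, ContDiff ℝ 2 (F m) := fun m => hμ.mul (by fun_prop)
  have hF0 : ∀ m, F m 0 = 0 := by simp [F]
  have hF1 : ∀ m, F m 1 = 0 := by simp [F, sin_nat_mul_pi]
  have hmat : ∀ m j : ℕ, matCoeff μ m (j + 1) = 2 * sineCoeff (F m) (j + 1) := by
    simp [matCoeff, sineCoeff, F]
  have H := ((hasSum_lam_mul_sineCoeff (hF m) ((hF k).of_le one_le_two) (hF0 m) (hF1 m) (hF0 k)
    (hF1 k)).mul_left 2).sub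
    ((hasSum_sineCoeff_mul (hF m).continuous (hF k).continuous).mul_left (lam m + lam k))
  rw [integral_deriv_mul_sin_mul_deriv_mul_sin (hμ.of_le one_le_two)] at H
  refine H.congr_fun fun j => ?_
  rw [hmat, hmat]
  ring

theorem series_identity_for_AK_general (μ : ℝ → ℝ) (hμ : IsH3 μ) (K : ℕ) :
    Summable (fun j : ℕ =>
      |(lam (j + 1) - (lam 1 + lam K) / 2) * matCoeff μ 1 (j + 1) * matCoeff μ K (j + 1)|) ∧
    ∑' j : ℕ, (lam (j + 1) - (lam 1 + lam K) / 2) * matCoeff μ 1 (j + 1) * matCoeff μ K (j + 1) =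
      2 * ∫ x in (0:ℝ)..1,
        (deriv μ x) ^ 2 * Real.sin (Real.pi * x) * Real.sin (K * Real.pi * x) := by
  have H := hasSum_lam_sub_mul_matCoeff hμ.1 1 K
  simp only [Nat.cast_one, one_mul] at H
  exact ⟨summable_abs_iff.2 H.summable, H.tsum_eq⟩

/-- For `μ ∈ H³` and `K ∈ ℕ*`:
`Σ_{j≥1} (λ_j − (λ₁+λ_K)/2) ⟨μφ₁,φ_j⟩⟨μφ_K,φ_j⟩ = ⟨(μ')²φ₁,φ_K⟩`,
with absolute convergence of the series. -/
theorem series_identity_for_AK (μ : ℝ → ℝ) (hμ : IsH3 μ) (K : ℕ) (hK : 0 < K) :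
    Summable (fun j : ℕ =>
      |(lam (j + 1) - (lam 1 + lam K) / 2) * matCoeff μ 1 (j + 1) * matCoeff μ K (j + 1)|) ∧
    ∑' j : ℕ, (lam (j + 1) - (lam 1 + lam K) / 2) * matCoeff μ 1 (j + 1) * matCoeff μ K (j + 1) =
      2 * ∫ x in (0:ℝ)..1,
        (deriv μ x) ^ 2 * Real.sin (Real.pi * x) * Real.sin (K * Real.pi * x) :=
  series_identity_for_AK_general μ hμ K
end
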